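/- arXiv:2604.23322 — 3 statements merged into one kernel-verified Lean document; each statement's English description precedes it below -/
import Mathlib

section
/- Let k be an algebraically closed field and let A = k·1 ⊕ J be a local commutative k-algebra of dimension 5 with Hilbert–Samuel type (1,2,1,1), i.e. dim_k(J/J²) = 2, dim_k(J²/J³) = 1, dim_k(J³) = 1, and J⁴ = 0. Let V be a faithful A-module with dim_k V = 6. Then dim_k End_A(V) ≥ 6, and in particular the image of A in M_6(k) is not a maximal commutative subalgebra. -/
/-- The dimension of the subquotient `P / (P ∩ Q)` of two subspaces `P, Q ⊆ V`;
for `Q ⊆ P` this is the dimension of `P/Q`. -/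
noncomputable def subquotientDim (k : Type*) [Field k] {V : Type*} [AddCommGroup V]
    [Module k V] (P Q : Submodule k V) : ℕ :=
  Module.finrank k (↥P ⧸ (Q.comap P.subtype))

/-!
Faithfulness embeds `A` into `End_A(V)`. Since `dim V = 6 > 5 = dim A`, neither `V` nor its dual
is cyclic, so by Nakayama `dim V/JV ≥ 2` and `dim soc V = dim V*/JV* ≥ 2`, where
`soc V = {v | Jv = 0}`. Every `k`-linear map `V/JV → soc V` gives an endomorphism
`V → V/JV → soc V ⊆ V`, and these form a subspace of `End_A(V)` of dimension at least `4`.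
It meets `A` only in `ann J`, and `ann J ⊊ J ⊊ A` because `J² ≠ 0`, so `dim ann J ≤ 3` and
`dim End_A(V) ≥ 5 + 4 - 3 = 6 > dim A`. As `End_A(V)` centralizes `A`, the image of `A` is not
its own centralizer.
-/

open Module Submodule IsLocalRing

section LocalAlgebra

variable {A : Type*} [CommRing A] [IsLocalRing A]

theorem annihilator_maximalIdeal_lt (h : maximalIdeal A ^ 2 ≠ ⊥) :
    (maximalIdeal A).annihilator < maximalIdeal A := by
  have hsq : maximalIdeal A • maximalIdeal A ≠ ⊥ := by rwa [smul_eq_mul, ← sq]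
  refine lt_of_le_of_ne (fun a ha => ?_) fun heq => hsq ?_
  · by_contra hna
    have htop := Ideal.eq_top_of_isUnit_mem _ ha (notMem_maximalIdeal.mp hna)
    rw [Submodule.annihilator_eq_top_iff] at htop
    exact hsq (by rw [htop, smul_bot])
  · nth_rewrite 1 [← heq]
    exact (maximalIdeal A).annihilator_smul

variable (k : Type*) [Field k] [Algebra k A] [FiniteDimensional k A]

theorem finrank_annihilator_maximalIdeal_add_two_le (h : maximalIdeal A ^ 2 ≠ ⊥) :
    finrank k ((maximalIdeal A).annihilator.restrictScalars k) + 2 ≤ finrank k A := by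
  have hann := Submodule.finrank_lt_finrank_of_lt
    (show (maximalIdeal A).annihilator.restrictScalars k < (maximalIdeal A).restrictScalars k
      from annihilator_maximalIdeal_lt h)
  have hmax := Submodule.finrank_lt (K := k) (s := (maximalIdeal A).restrictScalars k)
    (by simpa using (maximalIdeal.isMaximal A).ne_top)
  omega

end LocalAlgebra

section Nakayama

variable {k A M : Type*} [Field k] [CommRing A] [IsLocalRing A] [Algebra k A]
  [FiniteDimensional k A] [AddCommGroup M] [Module A M] [Module k M] [IsScalarTower k A M]
  [FiniteDimensional k M]

theorem two_le_finrank_quotient_maximalIdeal_smul_top (h : finrank k A < finrank k M) :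
    2 ≤ finrank k (M ⧸ (maximalIdeal A • ⊤ : Submodule A M).restrictScalars k) := by
  set N := (maximalIdeal A • ⊤ : Submodule A M)
  by_contra! hlt
  obtain ⟨q, hq⟩ := finrank_le_one_iff_top_isPrincipal.mp (Nat.le_of_lt_succ hlt)
  obtain ⟨v, rfl⟩ := Submodule.Quotient.mk_surjective _ q
  have : Module.Finite A M := Module.Finite.of_restrictScalars_finite k A M
  have hcyclic : (⊤ : Submodule A M) ≤ A ∙ v := by
    refine le_of_le_smul_of_le_jacobson_bot Module.Finite.fg_top (maximalIdeal_le_jacobson _) ?_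
    rintro w -
    obtain ⟨c, hc⟩ := mem_span_singleton.mp (hq ▸ mem_top (x := (N.restrictScalars k).mkQ w))
    have hw : w - c • v ∈ N.restrictScalars k :=
      (Submodule.Quotient.eq _).mp (by simpa using hc.symm)
    rw [show w = algebraMap k A c • v + (w - c • v) by rw [algebraMap_smul]; abel]
    exact add_mem_sup (smul_mem _ _ (mem_span_singleton_self v)) hw
  have hsurj : Function.Surjective ((LinearMap.toSpanSingleton A M v).restrictScalars k) :=
    fun w => mem_span_singleton.mp (hcyclic mem_top)
  have := LinearMap.finrank_range_le ((LinearMap.toSpanSingleton A M v).restrictScalars k)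
  rw [LinearMap.range_eq_top.mpr hsurj, finrank_top] at this
  omega

end Nakayama

section Socle

/-- `Dual k V` with `A` acting by `(a • φ) v = φ (a • v)`. -/
def TransposeDual (k _A V : Type*) [Field k] [AddCommGroup V] [Module k V] : Type _ := Dual k V

variable (k A V : Type*) [Field k] [CommRing A] [Algebra k A] [AddCommGroup V] [Module k V]
  [Module A V] [IsScalarTower k A V]

namespace TransposeDual

instance : AddCommGroup (TransposeDual k A V) := inferInstanceAs (AddCommGroup (Dual k V))

instance : Module k (TransposeDual k A V) := inferInstanceAs (Module k (Dual k V))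

instance [FiniteDimensional k V] : FiniteDimensional k (TransposeDual k A V) :=
  inferInstanceAs (FiniteDimensional k (Dual k V))

def toDual : TransposeDual k A V ≃ₗ[k] Dual k V := LinearEquiv.refl k (Dual k V)

def transposeAction : A →ₐ[k] Module.End k (Dual k V) where
  toFun a := (Algebra.lsmul k k V a).dualMap
  map_one' := by ext; simp
  map_mul' a b := by ext; simp [mul_comm a b]
  map_zero' := by ext; simp
  map_add' a b := by ext; simp
  commutes' c := by ext; simp

instance : Module A (TransposeDual k A V) :=
  Module.compHom (Dual k V) (transposeAction k A V).toRingHom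

instance : IsScalarTower k A (TransposeDual k A V) :=
  ⟨fun c a φ => by
    show transposeAction k A V (c • a) φ = c • transposeAction k A V a φ
    rw [map_smul]; rfl⟩

variable {k A V}

theorem toDual_smul_apply (a : A) (φ : TransposeDual k A V) (v : V) :
    toDual k A V (a • φ) v = toDual k A V φ (a • v) := rfl

end TransposeDual

open TransposeDual

variable {k A V}

theorem torsionBySet_restrictScalars_eq_dualCoannihilator (I : Ideal A) :
    (torsionBySet A V I).restrictScalars k =
      (((I • ⊤ : Submodule A (TransposeDual k A V)).restrictScalars k).map
        (toDual k A V).toLinearMap).dualCoannihilator := by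
  ext v
  simp only [restrictScalars_mem, mem_torsionBySet_iff, mem_dualCoannihilator, mem_map,
    LinearEquiv.coe_coe]
  constructor
  · rintro hv _ ⟨φ, hφ, rfl⟩
    refine smul_induction_on hφ (fun x hx ψ _ => ?_) fun ψ ψ' hψ hψ' => ?_
    · rw [toDual_smul_apply, hv ⟨x, hx⟩, map_zero]
    · rw [map_add, LinearMap.add_apply, hψ, hψ', add_zero]
  · rintro hv ⟨x, hx⟩
    refine (forall_dual_apply_eq_zero_iff k _).mp fun φ => ?_
    exact hv _ ⟨x • (toDual k A V).symm φ, smul_mem_smul hx mem_top, rfl⟩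

theorem finrank_torsionBySet_eq [FiniteDimensional k V] (I : Ideal A) :
    finrank k ((torsionBySet A V I).restrictScalars k) =
      finrank k (TransposeDual k A V ⧸
        (I • ⊤ : Submodule A (TransposeDual k A V)).restrictScalars k) := by
  set W := (I • ⊤ : Submodule A (TransposeDual k A V)).restrictScalars k
  have hcoann := Subspace.finrank_add_finrank_dualCoannihilator_eq
    (W.map (toDual k A V).toLinearMap)
  have hquot := Submodule.finrank_quotient_add_finrank W
  rw [LinearEquiv.finrank_map_eq, ← torsionBySet_restrictScalars_eq_dualCoannihilator] at hcoann
  rw [(toDual k A V).finrank_eq, Subspace.dual_finrank_eq] at hquot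
  omega

theorem two_le_finrank_torsionBySet_maximalIdeal [IsLocalRing A] [FiniteDimensional k A]
    [FiniteDimensional k V] (h : finrank k A < finrank k V) :
    2 ≤ finrank k ((torsionBySet A V (maximalIdeal A)).restrictScalars k) := by
  rw [finrank_torsionBySet_eq]
  apply two_le_finrank_quotient_maximalIdeal_smul_top
  rwa [(toDual k A V).finrank_eq, Subspace.dual_finrank_eq]

end Socle

section Endomorphisms

variable {k A V : Type*} [Field k] [CommRing A] [Algebra k A] [AddCommGroup V] [Module k V]
  [Module A V] [IsScalarTower k A V]

/-- `V → V/IV → (I-torsion of V) ⊆ V`. It is `A`-linear because `A = k + I` and `I` kills both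
`V/IV` and the `I`-torsion. -/
def endOfTopToTorsion (I : Ideal A)
    (hsplit : ∀ a : A, ∃ (c : k) (x : A), x ∈ I ∧ a = algebraMap k A c + x) :
    (V ⧸ (I • ⊤ : Submodule A V).restrictScalars k →ₗ[k]
      (torsionBySet A V I).restrictScalars k) →ₗ[k] (V →ₗ[A] V) where
  toFun g :=
    { toFun := ((torsionBySet A V I).restrictScalars k).subtype ∘ₗ g ∘ₗ
        ((I • ⊤ : Submodule A V).restrictScalars k).mkQ
      map_add' := map_add _
      map_smul' := fun a v => by
        obtain ⟨c, x, hx, rfl⟩ := hsplit a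
        have hxv : x • v ∈ (I • ⊤ : Submodule A V).restrictScalars k :=
          (restrictScalars_mem k _ _).mpr (smul_mem_smul hx mem_top)
        have hxg : x • (g (Submodule.Quotient.mk v) : V) = 0 :=
          (mem_torsionBySet_iff _ _).mp
            ((restrictScalars_mem k _ _).mp (g (Submodule.Quotient.mk v)).2) ⟨x, hx⟩
        simp [add_smul, (Submodule.Quotient.mk_eq_zero _).mpr hxv, hxg] }
  map_add' _ _ := rfl
  map_smul' _ _ := rfl

section

variable {I : Ideal A}
  {hsplit : ∀ a : A, ∃ (c : k) (x : A), x ∈ I ∧ a = algebraMap k A c + x}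

theorem endOfTopToTorsion_apply (g) (v : V) :
    endOfTopToTorsion I hsplit g v = g (Submodule.Quotient.mk v) := rfl

theorem endOfTopToTorsion_injective : Function.Injective (endOfTopToTorsion (V := V) I hsplit) :=
  fun _ _ hgh => LinearMap.ext fun q =>
    Subtype.ext <| Quotient.inductionOn' q fun v => congr($hgh v)

theorem comap_range_endOfTopToTorsion_le (hfaith : ∀ a : A, (∀ v : V, a • v = 0) → a = 0) :
    (LinearMap.range (endOfTopToTorsion I hsplit)).comap
      (Algebra.lsmul k A V : A →ₐ[k] Module.End A V).toLinearMap ≤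
      I.annihilator.restrictScalars k := by
  rintro a ⟨g, hg⟩
  refine (restrictScalars_mem k _ _).mpr (mem_annihilator.mpr fun x hx => hfaith _ fun v => ?_)
  have hxv : x • v ∈ (I • ⊤ : Submodule A V).restrictScalars k :=
    (restrictScalars_mem k _ _).mpr (smul_mem_smul hx mem_top)
  calc (a • x) • v = endOfTopToTorsion I hsplit g (x • v) := by rw [hg, smul_assoc]; rfl
    _ = 0 := by
        rw [endOfTopToTorsion_apply, (Submodule.Quotient.mk_eq_zero _).mpr hxv, map_zero,
          ZeroMemClass.coe_zero]

end

theorem finrank_add_mul_le_finrank_end_add [FiniteDimensional k A] [FiniteDimensional k V]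
    (I : Ideal A) (hsplit : ∀ a : A, ∃ (c : k) (x : A), x ∈ I ∧ a = algebraMap k A c + x)
    (hfaith : ∀ a : A, (∀ v : V, a • v = 0) → a = 0) :
    finrank k A + finrank k (V ⧸ (I • ⊤ : Submodule A V).restrictScalars k) *
        finrank k ((torsionBySet A V I).restrictScalars k) ≤
      finrank k (V →ₗ[A] V) + finrank k (I.annihilator.restrictScalars k) := by
  set μ : A →ₗ[k] (V →ₗ[A] V) :=
    (Algebra.lsmul k A V : A →ₐ[k] Module.End A V).toLinearMap
  set ι := endOfTopToTorsion (V := V) I hsplit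
  have : FiniteDimensional k (V →ₗ[A] V) :=
    .of_injective (LinearMap.restrictScalarsₗ k A V V k) (LinearMap.restrictScalars_injective k)
  have hμ : Function.Injective μ := (injective_iff_map_eq_zero μ).mpr fun a ha =>
    hfaith a fun v => congr($ha v)
  have hinf : finrank k ↥(LinearMap.range μ ⊓ LinearMap.range ι) ≤
      finrank k (I.annihilator.restrictScalars k) := by
    rw [← Submodule.map_comap_eq μ]
    exact (finrank_map_le μ _).trans (finrank_mono (comap_range_endOfTopToTorsion_le hfaith))
  have hsup := Submodule.finrank_sup_add_finrank_inf_eq (LinearMap.range μ) (LinearMap.range ι)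
  rw [LinearMap.finrank_range_of_inj hμ,
    LinearMap.finrank_range_of_inj endOfTopToTorsion_injective, finrank_linearMap] at hsup
  have := Submodule.finrank_le (LinearMap.range μ ⊔ LinearMap.range ι)
  omega

end Endomorphisms

theorem range_lsmul_ne_centralizer {k A V : Type*} [Field k] [CommRing A] [Algebra k A]
    [FiniteDimensional k A] [AddCommGroup V] [Module k V] [Module A V] [IsScalarTower k A V]
    (h : finrank k A < finrank k (V →ₗ[A] V)) :
    (Algebra.lsmul k k V : A →ₐ[k] Module.End k V).range ≠
      Subalgebra.centralizer k
        ((Algebra.lsmul k k V : A →ₐ[k] Module.End k V).range : Set (Module.End k V)) := by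
  intro heq
  have hrange : LinearMap.range (LinearMap.restrictScalarsₗ k A V V k) ≤
      LinearMap.range (Algebra.lsmul k k V : A →ₐ[k] Module.End k V).toLinearMap := by
    rintro _ ⟨f, rfl⟩
    show f.restrictScalars k ∈ (Algebra.lsmul k k V : A →ₐ[k] Module.End k V).range
    rw [heq, Subalgebra.mem_centralizer_iff]
    rintro _ ⟨a, rfl⟩
    ext v
    exact (f.map_smul a v).symm
  have hle := finrank_mono hrange
  rw [LinearMap.finrank_range_of_inj (LinearMap.restrictScalars_injective k)] at hle
  exact h.not_ge (hle.trans (LinearMap.finrank_range_le _))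

theorem type_1_2_1_1_endomorphisms_and_not_maximal_general
    (k : Type*) [Field k]
    (A : Type*) [CommRing A] [Algebra k A] [IsLocalRing A]
    (hsplit : ∀ a : A, ∃ (c : k) (x : A),
      x ∈ IsLocalRing.maximalIdeal A ∧ a = algebraMap k A c + x)
    (hdimA : Module.finrank k A = 5)
    (hJ3 : Module.finrank k (((IsLocalRing.maximalIdeal A) ^ 3).restrictScalars k) = 1)
    (V : Type*) [AddCommGroup V] [Module A V] [Module k V]
    [IsScalarTower k A V]
    (hfaith : ∀ a : A, (∀ v : V, a • v = 0) → a = 0)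
    (hdimV : Module.finrank k V = 6) :
    6 ≤ Module.finrank k (V →ₗ[A] V) ∧
    (Algebra.lsmul k k V : A →ₐ[k] Module.End k V).range ≠
      Subalgebra.centralizer k
        ((Algebra.lsmul k k V : A →ₐ[k] Module.End k V).range : Set (Module.End k V)) := by
  have : FiniteDimensional k A := .of_finrank_pos (by omega)
  have : FiniteDimensional k V := .of_finrank_pos (by omega)
  have hAV : finrank k A < finrank k V := by omega
  have hsq : maximalIdeal A ^ 2 ≠ ⊥ := fun h => by
    rw [pow_succ, h, Submodule.bot_mul, restrictScalars_bot, finrank_bot] at hJ3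
    exact zero_ne_one hJ3
  have hann := finrank_annihilator_maximalIdeal_add_two_le k hsq
  have htop := two_le_finrank_quotient_maximalIdeal_smul_top hAV
  have hsoc := two_le_finrank_torsionBySet_maximalIdeal hAV
  have hcount := finrank_add_mul_le_finrank_end_add (maximalIdeal A) hsplit hfaith
  have hEnd : 6 ≤ finrank k (V →ₗ[A] V) := by nlinarith
  exact ⟨hEnd, range_lsmul_ne_centralizer (by omega)⟩

/-- Let `k` be an algebraically closed field and `A = k·1 ⊕ J` a local commutative
`k`-algebra of dimension `5` with Hilbert–Samuel type `(1,2,1,1)`, i.e.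
`dim (J/J²) = 2`, `dim (J²/J³) = 1`, `dim J³ = 1`, `J⁴ = 0`.  Let `V` be a faithful
`A`-module of dimension `6`.  Then `dim_k End_A(V) ≥ 6`; in particular the image of `A`
in `M₆(k) ≅ End_k(V)` is not a maximal commutative subalgebra. -/
theorem type_1_2_1_1_endomorphisms_and_not_maximal
    (k : Type*) [Field k] [IsAlgClosed k]
    (A : Type*) [CommRing A] [Algebra k A] [IsLocalRing A]
    (hsplit : ∀ a : A, ∃ (c : k) (x : A),
      x ∈ IsLocalRing.maximalIdeal A ∧ a = algebraMap k A c + x)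
    (hdimA : Module.finrank k A = 5)
    (hJJ2 : subquotientDim k ((IsLocalRing.maximalIdeal A).restrictScalars k)
      (((IsLocalRing.maximalIdeal A) ^ 2).restrictScalars k) = 2)
    (hJ2J3 : subquotientDim k (((IsLocalRing.maximalIdeal A) ^ 2).restrictScalars k)
      (((IsLocalRing.maximalIdeal A) ^ 3).restrictScalars k) = 1)
    (hJ3 : Module.finrank k (((IsLocalRing.maximalIdeal A) ^ 3).restrictScalars k) = 1)
    (hJ4 : (IsLocalRing.maximalIdeal A) ^ 4 = ⊥)
    (V : Type*) [AddCommGroup V] [Module A V] [Module k V]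
    [IsScalarTower k A V] [SMulCommClass A k V]
    (hfaith : ∀ a : A, (∀ v : V, a • v = 0) → a = 0)
    (hdimV : Module.finrank k V = 6) :
    6 ≤ Module.finrank k (V →ₗ[A] V) ∧
    (Algebra.lsmul k k V : A →ₐ[k] Module.End k V).range ≠
      Subalgebra.centralizer k
        ((Algebra.lsmul k k V : A →ₐ[k] Module.End k V).range : Set (Module.End k V)) :=
  type_1_2_1_1_endomorphisms_and_not_maximal_general k A hsplit hdimA hJ3 V hfaith hdimV
end

section
/- Let k be an algebraically closed field and let A = k·1 ⊕ J be a local commutative k-algebra of dimension 5 with Hilbert–Samuel type (1,2,2), i.e. dim_k(J/J²) = 2, dim_k J² = 2, and J³ = 0. Let V be a faithful A-module with dim_k V = 6. Then dim_k End_A(V) ≥ 6; in particular the image of A in M_6(k) is not a maximal commutative subalgebra. -/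
/-!
Write `𝔪` for the maximal ideal and `U = ann_V 𝔪` for the socle of `V`. As `𝔪` is nilpotent, every
nonzero submodule `A v` meets `U`, so for a projection `π : V → U` the map `v ↦ (a ↦ π (a v))`
embeds `V` into `Hom_k(A, U)`: thus `6 ≤ 5 dim U`, and `dim U ≥ 2`. By Nakayama `dim V/𝔪V ≥ 2`,
as otherwise `V` would be cyclic and `dim V ≤ dim A`.

Since `A = k + 𝔪`, the maps `V → V/𝔪V → U → V` form a space `H ≅ Hom_k(V/𝔪V, U)` of dimension
`≥ 4` commuting with the image `ρ(A) ≅ A` of `A` in `End_k V`, as does `ρ(A)` itself. If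
`ρ(a) ∈ H` then `a 𝔪 V = 0`, so by faithfulness `a` lies in the socle of `A`, which is strictly
smaller than `𝔪` because `𝔪² ≠ 0` and so has dimension `≤ 3`. Hence the centralizer of `ρ(A)`,
which is `End_A V`, has dimension `≥ 5 + 4 - 3 = 6`.
-/

open IsLocalRing Submodule Module

section Socle

variable {A V : Type*} [CommRing A] [AddCommGroup V] [Module A V]

theorem exists_smul_ne_zero_mem_torsionBySet {I : Ideal A} (hI : IsNilpotent I) {v : V}
    (hv : v ≠ 0) : ∃ a : A, a • v ≠ 0 ∧ a • v ∈ torsionBySet A V I := by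
  obtain ⟨n, hn⟩ := hI
  suffices ∀ m, ∀ w : V, w ≠ 0 → (∀ x ∈ I ^ m, x • w = 0) →
      ∃ a : A, a • w ≠ 0 ∧ a • w ∈ torsionBySet A V I from
    this n v hv fun x hx => by rw [hn, Ideal.zero_eq_bot, Ideal.mem_bot] at hx; rw [hx, zero_smul]
  intro m
  induction m with
  | zero => exact fun w hw h => absurd (by simpa using h 1 (by simp)) hw
  | succ m ih =>
    intro w hw h
    by_cases hwI : w ∈ torsionBySet A V I
    · exact ⟨1, by rwa [one_smul], by rwa [one_smul]⟩
    obtain ⟨j, hj⟩ : ∃ j : I, (j : A) • w ≠ 0 := by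
      simpa [mem_torsionBySet_iff] using hwI
    obtain ⟨a, ha, haI⟩ := ih ((j : A) • w) hj fun x hx => by
      rw [smul_smul]
      exact h _ (pow_succ I m ▸ Ideal.mul_mem_mul hx j.2)
    exact ⟨a * j, by rwa [mul_smul], by rwa [mul_smul]⟩

theorem IsLocalRing.torsionBySet_maximalIdeal_lt [IsLocalRing A] (h : maximalIdeal A ^ 2 ≠ ⊥) :
    torsionBySet A A (maximalIdeal A) < maximalIdeal A := by
  have hmul : ∀ a ∈ torsionBySet A A (maximalIdeal A), ∀ x ∈ maximalIdeal A, x * a = 0 :=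
    fun a ha x hx => (mem_torsionBySet_iff _ a).mp ha ⟨x, hx⟩
  refine lt_of_le_of_ne (fun a ha => by_contra fun hna => h ?_) fun heq => h ?_
  · have ha : IsUnit a := notMem_maximalIdeal.mp hna
    refine eq_bot_iff.mpr ((Ideal.pow_le_self two_ne_zero).trans fun x hx => ?_)
    exact Ideal.mem_bot.mpr ((ha.mul_left_eq_zero).mp (hmul a ‹_› x hx))
  · rw [sq, eq_bot_iff]
    exact Ideal.mul_le.mpr fun x hx y hy => Ideal.mem_bot.mpr (hmul y (heq.ge hy) x hx)

end Socle

section FiniteDimensional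

variable {k A V : Type*} [Field k] [CommRing A] [Algebra k A] [AddCommGroup V] [Module A V]
  [Module k V] [IsScalarTower k A V]

theorem finrank_le_finrank_mul_finrank_torsionBySet [FiniteDimensional k A]
    [FiniteDimensional k V] {I : Ideal A} (hI : IsNilpotent I) :
    finrank k V ≤ finrank k A * finrank k ((torsionBySet A V I).restrictScalars k) := by
  set U := (torsionBySet A V I).restrictScalars k
  obtain ⟨W, hUW⟩ := U.exists_isCompl
  let Φ : V →ₗ[k] A →ₗ[k] U :=
    (Algebra.lsmul k k V).toLinearMap.flip.compr₂ (U.projectionOnto W hUW)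
  have hΦ : Function.Injective Φ := by
    refine (injective_iff_map_eq_zero Φ).mpr fun v hv => by_contra fun hv0 => ?_
    obtain ⟨a, ha, haU⟩ := exists_smul_ne_zero_mem_torsionBySet hI hv0
    have : U.projectionOnto W hUW (a • v) = 0 := LinearMap.congr_fun hv a
    rw [projectionOnto_apply_left hUW ⟨a • v, haU⟩] at this
    exact ha (congrArg Subtype.val this)
  calc finrank k V ≤ finrank k (A →ₗ[k] U) := LinearMap.finrank_le_finrank_of_injective hΦ
    _ = _ := finrank_linearMap k k A U

theorem finrank_torsionBySet_maximalIdeal_add_two_le [IsLocalRing A] [FiniteDimensional k A]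
    (h : maximalIdeal A ^ 2 ≠ ⊥) :
    finrank k ((torsionBySet A A (maximalIdeal A)).restrictScalars k) + 2 ≤ finrank k A := by
  have hmono := (restrictScalarsEmbedding k A A).strictMono
  have hsoc : finrank k ((torsionBySet A A (maximalIdeal A)).restrictScalars k) <
      finrank k ((maximalIdeal A).restrictScalars k) :=
    finrank_lt_finrank_of_lt (hmono (torsionBySet_maximalIdeal_lt h))
  have hmax : finrank k ((maximalIdeal A).restrictScalars k) < finrank k (⊤ : Submodule k A) :=
    finrank_lt_finrank_of_lt (hmono (lt_top_iff_ne_top.mpr (maximalIdeal.isMaximal A).ne_top))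
  rw [finrank_top] at hmax
  omega

theorem span_singleton_eq_top_of_finrank_quotient_le_one [IsLocalRing A] [FiniteDimensional k V]
    (hV : finrank k (V ⧸ (maximalIdeal A • ⊤ : Submodule A V)) ≤ 1) :
    ∃ v : V, span A {v} = ⊤ := by
  have : Module.Finite A V := .of_restrictScalars_finite k A V
  obtain ⟨q, hq⟩ := finrank_le_one_iff.mp hV
  obtain ⟨v, rfl⟩ := mkQ_surjective _ q
  refine ⟨v, map_mkQ_eq_top.mp (eq_top_iff.mpr fun q' _ => ?_)⟩
  obtain ⟨c, rfl⟩ := hq q'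
  exact ⟨algebraMap k A c • v, smul_mem _ _ (mem_span_singleton_self v), by simp⟩

theorem finrank_le_finrank_of_finrank_quotient_le_one [IsLocalRing A] [FiniteDimensional k A]
    [FiniteDimensional k V] (hV : finrank k (V ⧸ (maximalIdeal A • ⊤ : Submodule A V)) ≤ 1) :
    finrank k V ≤ finrank k A := by
  obtain ⟨v, hv⟩ := span_singleton_eq_top_of_finrank_quotient_le_one hV
  let φ := (LinearMap.toSpanSingleton A V v).restrictScalars k
  have hφ : LinearMap.range φ = ⊤ := by
    rw [LinearMap.range_restrictScalars, ← LinearMap.span_singleton_eq_range, hv,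
      restrictScalars_top]
  calc finrank k V = finrank k (LinearMap.range φ) := by rw [hφ, finrank_top]
    _ ≤ finrank k A := LinearMap.finrank_range_le φ

end FiniteDimensional

section Endomorphisms

variable {k A V : Type*} [Field k] [CommRing A] [Algebra k A] [AddCommGroup V] [Module A V]
  [Module k V] [IsScalarTower k A V]

-- `Hom_k(V / IV, ann_V I)`, embedded in `End_k V`
variable (k V) in
def annihilatorEnd (I : Ideal A) : Submodule k (Module.End k V) where
  carrier := {f | ∀ x ∈ I, ∀ v, f (x • v) = 0 ∧ x • f v = 0}
  add_mem' hf hg x hx v := by simp [hf x hx v, hg x hx v]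
  zero_mem' x hx v := by simp
  smul_mem' c f hf x hx v := by simp [hf x hx v, smul_comm x c]

theorem finrank_linearMap_eq_finrank_centralizer :
    finrank k (V →ₗ[A] V) = finrank k (Subalgebra.centralizer k
      ((Algebra.lsmul k k V : A →ₐ[k] Module.End k V).range : Set (Module.End k V))) := by
  have hrange : LinearMap.range (LinearMap.restrictScalarsₗ k A V V k) =
      Subalgebra.toSubmodule (Subalgebra.centralizer k
        ((Algebra.lsmul k k V : A →ₐ[k] Module.End k V).range : Set (Module.End k V))) := by
    ext f
    rw [Subalgebra.mem_toSubmodule, Subalgebra.mem_centralizer_iff]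
    constructor
    · rintro ⟨g, rfl⟩ _ ⟨a, rfl⟩
      ext v
      exact (g.map_smul a v).symm
    · intro hf
      exact ⟨{ f with map_smul' := fun a v => (LinearMap.congr_fun (hf _ ⟨a, rfl⟩) v).symm }, rfl⟩
  rw [← LinearMap.finrank_range_of_inj (f := LinearMap.restrictScalarsₗ k A V V k)
    (LinearMap.restrictScalars_injective k), hrange]
  rfl

theorem injective_lsmul [FaithfulSMul A V] :
    Function.Injective (Algebra.lsmul k k V : A →ₐ[k] Module.End k V).toLinearMap := fun _ _ h =>
  eq_of_smul_eq_smul (α := V) fun v => LinearMap.congr_fun h v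

theorem finrank_range_lsmul [FaithfulSMul A V] :
    finrank k (Algebra.lsmul k k V : A →ₐ[k] Module.End k V).range = finrank k A :=
  LinearMap.finrank_range_of_inj injective_lsmul

theorem annihilatorEnd_le_centralizer {I : Ideal A}
    (hsplit : ∀ a : A, ∃ (c : k) (x : A), x ∈ I ∧ a = algebraMap k A c + x) :
    annihilatorEnd k V I ≤ Subalgebra.toSubmodule (Subalgebra.centralizer k
      ((Algebra.lsmul k k V : A →ₐ[k] Module.End k V).range : Set (Module.End k V))) := by
  intro f hf
  rw [Subalgebra.mem_toSubmodule, Subalgebra.mem_centralizer_iff]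
  rintro _ ⟨a, rfl⟩
  obtain ⟨c, x, hx, rfl⟩ := hsplit a
  ext v
  simp [(hf x hx v).1, (hf x hx v).2]

theorem finrank_quotient_mul_finrank_torsionBySet_le_finrank_annihilatorEnd
    [FiniteDimensional k V] (I : Ideal A) :
    finrank k (V ⧸ (I • ⊤ : Submodule A V)) * finrank k ((torsionBySet A V I).restrictScalars k) ≤
      finrank k (annihilatorEnd k V I) := by
  set U := (torsionBySet A V I).restrictScalars k
  set q := (I • ⊤ : Submodule A V).mkQ.restrictScalars k
  have hq : Function.Surjective q := Submodule.Quotient.mk_surjective _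
  let Θ : ((V ⧸ (I • ⊤ : Submodule A V)) →ₗ[k] U) →ₗ[k] Module.End k V :=
    LinearMap.lcomp k V q ∘ₗ LinearMap.compRight k U.subtype
  have hΘ : Function.Injective Θ :=
    fun f g (h : (U.subtype ∘ₗ f) ∘ₗ q = (U.subtype ∘ₗ g) ∘ₗ q) =>
      (LinearMap.cancel_left U.injective_subtype).mp ((LinearMap.cancel_right hq).mp h)
  have hrange : LinearMap.range Θ ≤ annihilatorEnd k V I := by
    rintro _ ⟨f, rfl⟩ x hx v
    refine ⟨?_, (mem_torsionBySet_iff _ _).mp (f _).2 ⟨x, hx⟩⟩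
    change (f (Submodule.Quotient.mk (x • v)) : V) = 0
    rw [(Submodule.Quotient.mk_eq_zero _).mpr (smul_mem_smul hx mem_top), map_zero,
      ZeroMemClass.coe_zero]
  calc _ = finrank k ((V ⧸ (I • ⊤ : Submodule A V)) →ₗ[k] U) := (finrank_linearMap k k _ _).symm
    _ = finrank k (LinearMap.range Θ) := (LinearMap.finrank_range_of_inj hΘ).symm
    _ ≤ _ := finrank_mono hrange

theorem range_lsmul_inf_annihilatorEnd_le_map_torsionBySet [FaithfulSMul A V] (I : Ideal A) :
    Subalgebra.toSubmodule (Algebra.lsmul k k V : A →ₐ[k] Module.End k V).range ⊓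
        annihilatorEnd k V I ≤
      ((torsionBySet A A I).restrictScalars k).map
        (Algebra.lsmul k k V : A →ₐ[k] Module.End k V).toLinearMap := by
  rintro _ ⟨⟨a, rfl⟩, hf⟩
  refine ⟨a, (mem_torsionBySet_iff _ _).mpr fun ⟨x, hx⟩ => ?_, rfl⟩
  refine eq_of_smul_eq_smul (α := V) fun v => ?_
  rw [zero_smul, smul_eq_mul, mul_comm, mul_smul]
  exact (hf x hx v).1

theorem finrank_add_mul_le_finrank_centralizer_add [FiniteDimensional k V] [FaithfulSMul A V]
    {I : Ideal A} (hsplit : ∀ a : A, ∃ (c : k) (x : A), x ∈ I ∧ a = algebraMap k A c + x) :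
    finrank k A + finrank k (V ⧸ (I • ⊤ : Submodule A V)) *
        finrank k ((torsionBySet A V I).restrictScalars k) ≤
      finrank k (Subalgebra.centralizer k
        ((Algebra.lsmul k k V : A →ₐ[k] Module.End k V).range : Set (Module.End k V))) +
      finrank k ((torsionBySet A A I).restrictScalars k) := by
  set ρ := (Algebra.lsmul k k V : A →ₐ[k] Module.End k V)
  set P := Subalgebra.toSubmodule ρ.range
  set C := Subalgebra.centralizer k (ρ.range : Set (Module.End k V))
  have : FiniteDimensional k A := .of_injective ρ.toLinearMap injective_lsmul
  have hPC : P ≤ Subalgebra.toSubmodule C := by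
    rintro _ ⟨a, rfl⟩
    rw [Subalgebra.mem_toSubmodule, Subalgebra.mem_centralizer_iff]
    rintro _ ⟨b, rfl⟩
    rw [← map_mul, mul_comm, map_mul]
  have hsup := finrank_mono (sup_le hPC (annihilatorEnd_le_centralizer (V := V) hsplit))
  have hinf : finrank k ↥(P ⊓ annihilatorEnd k V I) ≤
      finrank k ((torsionBySet A A I).restrictScalars k) :=
    (finrank_mono (range_lsmul_inf_annihilatorEnd_le_map_torsionBySet I)).trans
      (finrank_map_le ρ.toLinearMap _)
  have hdim := finrank_sup_add_finrank_inf_eq P (annihilatorEnd k V I)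
  have hH := finrank_quotient_mul_finrank_torsionBySet_le_finrank_annihilatorEnd (k := k) (V := V) I
  have hP : finrank k P = finrank k A := finrank_range_lsmul
  change _ ≤ finrank k (Subalgebra.toSubmodule C) + _
  omega

end Endomorphisms

theorem type_1_2_2_endomorphisms_and_not_maximal_general
    (k : Type*) [Field k]
    (A : Type*) [CommRing A] [Algebra k A] [IsLocalRing A]
    (hsplit : ∀ a : A, ∃ (c : k) (x : A),
      x ∈ IsLocalRing.maximalIdeal A ∧ a = algebraMap k A c + x)
    (hdimA : Module.finrank k A = 5)
    (hJ2 : Module.finrank k (((IsLocalRing.maximalIdeal A) ^ 2).restrictScalars k) = 2)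
    (hJ3 : (IsLocalRing.maximalIdeal A) ^ 3 = ⊥)
    (V : Type*) [AddCommGroup V] [Module A V] [Module k V]
    [IsScalarTower k A V]
    (hfaith : ∀ a : A, (∀ v : V, a • v = 0) → a = 0)
    (hdimV : Module.finrank k V = 6) :
    6 ≤ Module.finrank k (V →ₗ[A] V) ∧
    (Algebra.lsmul k k V : A →ₐ[k] Module.End k V).range ≠
      Subalgebra.centralizer k
        ((Algebra.lsmul k k V : A →ₐ[k] Module.End k V).range : Set (Module.End k V)) := by
  have : FiniteDimensional k A := Module.finite_of_finrank_pos (by omega)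
  have : FiniteDimensional k V := Module.finite_of_finrank_pos (by omega)
  have : FaithfulSMul A V :=
    ⟨fun h => sub_eq_zero.mp (hfaith _ fun v => by rw [sub_smul, h, sub_self])⟩
  have hU : 2 ≤ finrank k ((torsionBySet A V (maximalIdeal A)).restrictScalars k) := by
    have := finrank_le_finrank_mul_finrank_torsionBySet (k := k) (V := V)
      (I := maximalIdeal A) ⟨3, hJ3⟩
    rw [hdimA, hdimV] at this
    omega
  have hQ : 2 ≤ finrank k (V ⧸ (maximalIdeal A • ⊤ : Submodule A V)) := by
    have := mt (finrank_le_finrank_of_finrank_quotient_le_one (k := k) (A := A) (V := V))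
    omega
  have hsocA := finrank_torsionBySet_maximalIdeal_add_two_le (k := k) (A := A) fun h => by
    rw [h, restrictScalars_bot, finrank_bot] at hJ2
    omega
  have hC : 6 ≤ finrank k (Subalgebra.centralizer k
      ((Algebra.lsmul k k V : A →ₐ[k] Module.End k V).range : Set (Module.End k V))) := by
    linarith [finrank_add_mul_le_finrank_centralizer_add (A := A) (V := V) hsplit,
      Nat.mul_le_mul hQ hU]
  rw [finrank_linearMap_eq_finrank_centralizer]
  refine ⟨hC, fun h => ?_⟩
  rw [← h, finrank_range_lsmul] at hC
  omega

/-- Let `k` be an algebraically closed field and `A = k·1 ⊕ J` a local commutative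
`k`-algebra of dimension `5` with Hilbert–Samuel type `(1,2,2)`, i.e. `dim (J/J²) = 2`,
`dim J² = 2`, `J³ = 0`.  Let `V` be a faithful `A`-module of dimension `6`.  Then
`dim_k End_A(V) ≥ 6`; in particular the image of `A` in `M₆(k) ≅ End_k(V)` is not a
maximal commutative subalgebra. -/
theorem type_1_2_2_endomorphisms_and_not_maximal
    (k : Type*) [Field k] [IsAlgClosed k]
    (A : Type*) [CommRing A] [Algebra k A] [IsLocalRing A]
    (hsplit : ∀ a : A, ∃ (c : k) (x : A),
      x ∈ IsLocalRing.maximalIdeal A ∧ a = algebraMap k A c + x)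
    (hdimA : Module.finrank k A = 5)
    (hJJ2 : subquotientDim k ((IsLocalRing.maximalIdeal A).restrictScalars k)
      (((IsLocalRing.maximalIdeal A) ^ 2).restrictScalars k) = 2)
    (hJ2 : Module.finrank k (((IsLocalRing.maximalIdeal A) ^ 2).restrictScalars k) = 2)
    (hJ3 : (IsLocalRing.maximalIdeal A) ^ 3 = ⊥)
    (V : Type*) [AddCommGroup V] [Module A V] [Module k V]
    [IsScalarTower k A V] [SMulCommClass A k V]
    (hfaith : ∀ a : A, (∀ v : V, a • v = 0) → a = 0)
    (hdimV : Module.finrank k V = 6) :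
    6 ≤ Module.finrank k (V →ₗ[A] V) ∧
    (Algebra.lsmul k k V : A →ₐ[k] Module.End k V).range ≠
      Subalgebra.centralizer k
        ((Algebra.lsmul k k V : A →ₐ[k] Module.End k V).range : Set (Module.End k V)) :=
  type_1_2_2_endomorphisms_and_not_maximal_general k A hsplit hdimA hJ2 hJ3 V hfaith hdimV
end

section
/- Let k be an algebraically closed field. There is no 5-dimensional local commutative k-algebra A admitting a faithful module V with dim_k V = 6 such that the image of A in End_k(V) ≅ M_6(k) equals its own centralizer in End_k(V). -/
/-!
Let `J` be the maximal ideal of `A`, `t = dim V/JV` and `s = dim soc V`, where `soc V` is the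
annihilator of `J` in `V`. Because the residue field is `k`, every `k`-linear map
`V → V/JV → soc V → V` commutes with `A`; by maximality it is multiplication by some `a ∈ A`, and
faithfulness forces `a J = 0`. Hence `t s ≤ dim (ann J) ≤ dim J = 4`. On the other hand `t ≤ 1`
makes `V` cyclic by Nakayama, and `s ≤ 1` embeds `V` into the dual of `A` via
`v ↦ (a ↦ φ (a v))` for a functional `φ` whose kernel meets the socle trivially; either way `dim V ≤ 5`.
So `t = s = 2` and `ann J = J`, i.e. `J² = 0`. Then `JV ⊆ soc V`, and `6 = t + dim JV ≤ t + s = 4`.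
-/

open IsLocalRing Module Submodule

theorem exists_sub_algebraMap_mem_maximalIdeal {k A : Type*} [Field k] [IsAlgClosed k] [CommRing A]
    [Algebra k A] [IsLocalRing A] [Module.Finite k A] (a : A) :
    ∃ c : k, a - algebraMap k A c ∈ maximalIdeal A := by
  have : Module.Finite k (ResidueField A) :=
    .of_surjective (IsScalarTower.toAlgHom k A (ResidueField A)).toLinearMap residue_surjective
  have : Algebra.IsIntegral k (ResidueField A) := .of_finite k _
  obtain ⟨c, hc⟩ := IsAlgClosed.algebraMap_bijective_of_isIntegral (k := k).2 (residue A a)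
  refine ⟨c, ?_⟩
  rw [← residue_eq_zero_iff, map_sub, ← ResidueField.algebraMap_eq, ← IsScalarTower.algebraMap_apply,
    hc, ResidueField.algebraMap_eq, sub_self]

theorem finrank_maximalIdeal_add_one (k A : Type*) [Field k] [IsAlgClosed k] [CommRing A]
    [Algebra k A] [IsLocalRing A] [Module.Finite k A] :
    finrank k ((maximalIdeal A).restrictScalars k) + 1 = finrank k A := by
  set J := (maximalIdeal A).restrictScalars k
  have hresidue : finrank k (A ⧸ J) = 1 := by
    refine (finrank_eq_one_iff_of_nonzero' (J.mkQ 1) ?_).2 fun w => ?_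
    · rw [mkQ_apply, Ne, Quotient.mk_eq_zero, restrictScalars_mem]
      exact (Ideal.ne_top_iff_one _).1 (maximalIdeal.isMaximal A).ne_top
    · obtain ⟨a, rfl⟩ := J.mkQ_surjective w
      obtain ⟨c, hc⟩ := exists_sub_algebraMap_mem_maximalIdeal (k := k) a
      refine ⟨c, ?_⟩
      rw [← map_smul, mkQ_apply, mkQ_apply, Submodule.Quotient.eq', Algebra.smul_def, mul_one,
        neg_add_eq_sub]
      exact hc
  rw [← J.finrank_quotient_add_finrank, hresidue, add_comm]

theorem IsArtinianRing.isNilpotent_maximalIdeal (A : Type*) [CommRing A] [IsLocalRing A]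
    [IsArtinianRing A] : IsNilpotent (maximalIdeal A) := by
  simpa [jacobson_eq_maximalIdeal ⊥ bot_ne_top] using IsArtinianRing.isNilpotent_jacobson_bot (R := A)

theorem Submodule.exists_mem_torsionBySet_ne_zero {R M : Type*} [CommRing R] [AddCommGroup M]
    [Module R M] {I : Ideal R} {n : ℕ} {N : Submodule R M} (hN : N ≠ ⊥) (hn : I ^ n • N = ⊥) :
    ∃ u ∈ N, u ≠ 0 ∧ u ∈ torsionBySet R M I := by
  induction n generalizing N with
  | zero => simp_all
  | succ n ih =>
    by_cases hIN : I • N = ⊥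
    · obtain ⟨u, hu, hu0⟩ := exists_mem_ne_zero_of_ne_bot hN
      refine ⟨u, hu, hu0, (mem_torsionBySet_iff _ _).2 fun ⟨x, hx⟩ => ?_⟩
      simpa [hIN] using smul_mem_smul hx hu
    · obtain ⟨u, hu, hu0, htors⟩ :=
        ih hIN (by rw [← Submodule.smul_assoc, Ideal.smul_eq_mul, ← pow_succ, hn])
      exact ⟨u, smul_le_right hu, hu0, htors⟩

theorem Submodule.smul_top_le_torsionBySet_of_le_annihilator {R M : Type*} [CommRing R]
    [AddCommGroup M] [Module R M] {I : Ideal R} (h : I ≤ I.annihilator) :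
    I • (⊤ : Submodule R M) ≤ torsionBySet R M I :=
  smul_le.2 fun r hr m _ => (mem_torsionBySet_iff _ _).2 fun ⟨x, hx⟩ => by
    rw [smul_smul, mul_comm, ← smul_eq_mul, mem_annihilator.1 (h hr) x hx, zero_smul]

theorem Submodule.mem_annihilator_of_forall_smul_top_smul_eq_zero {R M : Type*} [CommRing R] [AddCommGroup M]
    [Module R M] (hfaith : ∀ a : R, (∀ v : M, a • v = 0) → a = 0) {I : Ideal R} {a : R}
    (h : ∀ v ∈ I • (⊤ : Submodule R M), a • v = 0) : a ∈ I.annihilator :=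
  mem_annihilator.2 fun j hj => hfaith _ fun v => by
    rw [smul_eq_mul, mul_smul]
    exact h _ (smul_mem_smul hj mem_top)

theorem Module.Dual.exists_disjoint_ker_of_finrank_le_one {k V : Type*} [Field k] [AddCommGroup V]
    [Module k V] {p : Submodule k V} [Module.Finite k p] (hp : finrank k p ≤ 1) :
    ∃ φ : Dual k V, Disjoint (LinearMap.ker φ) p := by
  obtain ⟨w, hw⟩ := finrank_le_one_iff.1 hp
  obtain ⟨φ, hφ⟩ : ∃ φ : Dual k V, (w : V) ≠ 0 → φ w ≠ 0 := by
    by_cases hw0 : (w : V) = 0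
    · exact ⟨0, fun h => absurd hw0 h⟩
    · obtain ⟨φ, hφ⟩ := Module.Projective.exists_dual_ne_zero k hw0
      exact ⟨φ, fun _ => hφ⟩
  refine ⟨φ, disjoint_iff_inf_le.2 fun u ⟨hker, hu⟩ => ?_⟩
  obtain ⟨c, hc⟩ := hw ⟨u, hu⟩
  have hu : u = c • (w : V) := congrArg Subtype.val hc.symm
  have hφu : c • φ w = 0 := by rw [← map_smul, ← hu]; exact hker
  rw [mem_bot, hu]
  by_cases hw0 : (w : V) = 0
  · rw [hw0, smul_zero]
  · rw [(smul_eq_zero.1 hφu).resolve_right (hφ hw0), zero_smul]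

section LocalAlgebraModule

variable {k A V : Type*} [Field k] [CommRing A] [Algebra k A] [IsLocalRing A]
  [AddCommGroup V] [Module A V] [Module k V] [IsScalarTower k A V]

variable (k A V) in
abbrev radical : Submodule k V := (maximalIdeal A • ⊤ : Submodule A V).restrictScalars k

variable (k A V) in
abbrev socle : Submodule k V := (torsionBySet A V (maximalIdeal A)).restrictScalars k

theorem finrank_le_of_finrank_quotient_radical_le_one [Module.Finite k A] [Module.Finite k V]
    (h : finrank k (V ⧸ radical k A V) ≤ 1) : finrank k V ≤ finrank k A := by
  obtain ⟨q, hq⟩ := finrank_le_one_iff.1 h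
  obtain ⟨v, rfl⟩ := (radical k A V).mkQ_surjective q
  have := Module.Finite.of_restrictScalars_finite k A V
  have hspan : span A {v} = ⊤ := by
    refine eq_top_iff.2 (le_of_le_smul_of_le_jacobson_bot Module.Finite.fg_top
      (maximalIdeal_le_jacobson ⊥) fun u _ => ?_)
    obtain ⟨c, hc⟩ := hq ((radical k A V).mkQ u)
    have hrad : u - c • v ∈ maximalIdeal A • (⊤ : Submodule A V) := by
      rwa [← map_smul, mkQ_apply, mkQ_apply, Submodule.Quotient.eq', neg_add_eq_sub] at hc
    refine mem_sup.2 ⟨algebraMap k A c • v, smul_mem _ _ (mem_span_singleton_self v), _, hrad, ?_⟩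
    rw [algebraMap_smul, add_sub_cancel]
  refine LinearMap.finrank_le_finrank_of_surjective
    (f := (LinearMap.toSpanSingleton A V v).restrictScalars k) fun u => ?_
  exact mem_span_singleton.1 (hspan ▸ mem_top : u ∈ span A {v})

theorem finrank_le_of_finrank_socle_le_one [Module.Finite k A] [Module.Finite k V]
    [SMulCommClass A k V] (h : finrank k (socle k A V) ≤ 1) : finrank k V ≤ finrank k A := by
  have : IsArtinianRing A := isArtinian_of_tower k inferInstance
  obtain ⟨n, hn⟩ := IsArtinianRing.isNilpotent_maximalIdeal A
  obtain ⟨φ, hφ⟩ := Module.Dual.exists_disjoint_ker_of_finrank_le_one h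
  let Φ : V →ₗ[k] Dual k A :=
    (Algebra.lsmul k k V : A →ₐ[k] Module.End k V).toLinearMap.flip.compr₂ φ
  suffices Function.Injective Φ by
    simpa [Subspace.dual_finrank_eq] using LinearMap.finrank_le_finrank_of_injective this
  refine (injective_iff_map_eq_zero Φ).2 fun v hv => by_contra fun hv0 => ?_
  have hspan : span A {v} ≠ ⊥ := by simpa using hv0
  obtain ⟨u, hu, hu0, hsoc⟩ := exists_mem_torsionBySet_ne_zero hspan
    (by rw [hn, zero_eq_bot, bot_smul] : maximalIdeal A ^ n • span A {v} = ⊥)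
  obtain ⟨a, rfl⟩ := mem_span_singleton.1 hu
  exact hu0 (disjoint_iff_inf_le.1 hφ ⟨LinearMap.congr_fun hv a, hsoc⟩)


variable (k A V) in
def endOfHomQuotientSocle : (V ⧸ radical k A V →ₗ[k] socle k A V) →ₗ[k] Module.End k V :=
  LinearMap.lcomp k V (radical k A V).mkQ ∘ₗ LinearMap.llcomp k _ _ V (socle k A V).subtype

@[simp]
theorem endOfHomQuotientSocle_apply (f : V ⧸ radical k A V →ₗ[k] socle k A V) (v : V) :
    endOfHomQuotientSocle k A V f v = f ((radical k A V).mkQ v) := rfl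

theorem endOfHomQuotientSocle_injective : Function.Injective (endOfHomQuotientSocle k A V) :=
  fun f g h => LinearMap.ext fun q => by
    obtain ⟨v, rfl⟩ := (radical k A V).mkQ_surjective q
    exact Subtype.ext (LinearMap.congr_fun h v)

theorem endOfHomQuotientSocle_eq_zero_of_mem_radical (f : V ⧸ radical k A V →ₗ[k] socle k A V)
    {v : V} (hv : v ∈ radical k A V) : endOfHomQuotientSocle k A V f v = 0 := by
  simp [(Submodule.Quotient.mk_eq_zero _).2 hv]

-- `A` acts on both `V/JV` and `soc V` through its residue field, which is `k`.
theorem endOfHomQuotientSocle_map_smul [IsAlgClosed k] [Module.Finite k A]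
    (f : V ⧸ radical k A V →ₗ[k] socle k A V) (a : A) (v : V) :
    endOfHomQuotientSocle k A V f (a • v) = a • endOfHomQuotientSocle k A V f v := by
  obtain ⟨c, hc⟩ := exists_sub_algebraMap_mem_maximalIdeal (k := k) a
  have hrad : (a - algebraMap k A c) • v ∈ radical k A V :=
    (restrictScalars_mem k _ _).2 (smul_mem_smul hc mem_top)
  have hsoc : (a - algebraMap k A c) • endOfHomQuotientSocle k A V f v = 0 :=
    (mem_torsionBySet_iff _ _).1 (f _).2 ⟨_, hc⟩
  have hv := endOfHomQuotientSocle_eq_zero_of_mem_radical f hrad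
  rw [sub_smul, algebraMap_smul, map_sub, sub_eq_zero,
    (endOfHomQuotientSocle k A V f).map_smul] at hv
  rw [sub_smul, algebraMap_smul, sub_eq_zero] at hsoc
  rw [hv, hsoc]

theorem finrank_quotient_radical_mul_finrank_socle_le [IsAlgClosed k] [Module.Finite k A]
    [Module.Finite k V] [SMulCommClass A k V] (hfaith : ∀ a : A, (∀ v : V, a • v = 0) → a = 0)
    (hcent : Subalgebra.centralizer k
        ((Algebra.lsmul k k V : A →ₐ[k] Module.End k V).range : Set (Module.End k V)) ≤
      (Algebra.lsmul k k V : A →ₐ[k] Module.End k V).range) :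
    finrank k (V ⧸ radical k A V) * finrank k (socle k A V) ≤
      finrank k ((maximalIdeal A).annihilator.restrictScalars k) := by
  set ρ := (Algebra.lsmul k k V : A →ₐ[k] Module.End k V)
  have hrange : LinearMap.range (endOfHomQuotientSocle k A V) ≤
      ((maximalIdeal A).annihilator.restrictScalars k).map ρ.toLinearMap := by
    rintro _ ⟨f, rfl⟩
    have hcomm : endOfHomQuotientSocle k A V f ∈ Subalgebra.centralizer k (ρ.range : Set _) := by
      rintro _ ⟨a, rfl⟩
      exact LinearMap.ext fun v => (endOfHomQuotientSocle_map_smul f a v).symm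
    obtain ⟨a, ha⟩ := (ρ.mem_range).1 (hcent hcomm)
    refine ⟨a, mem_annihilator_of_forall_smul_top_smul_eq_zero hfaith fun v hv => ?_, ha⟩
    exact (LinearMap.congr_fun ha v).trans (endOfHomQuotientSocle_eq_zero_of_mem_radical f hv)
  calc finrank k (V ⧸ radical k A V) * finrank k (socle k A V)
      = finrank k (V ⧸ radical k A V →ₗ[k] socle k A V) := (finrank_linearMap k k _ _).symm
    _ = finrank k (LinearMap.range (endOfHomQuotientSocle k A V)) :=
      (LinearMap.finrank_range_of_inj endOfHomQuotientSocle_injective).symm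
    _ ≤ _ := finrank_mono hrange
    _ ≤ _ := finrank_map_le _ _

end LocalAlgebraModule

/-- Let `k` be an algebraically closed field.  There is no 5-dimensional local
commutative `k`-algebra `A` admitting a faithful module `V` with `dim_k V = 6` such
that the image of `A` in `End_k(V) ≅ M₆(k)` equals its own centralizer. -/
theorem no_five_dimensional_maximal_commutative_local_algebra_in_M6
    (k : Type*) [Field k] [IsAlgClosed k]
    (A : Type*) [CommRing A] [Algebra k A] [IsLocalRing A]
    (hdimA : Module.finrank k A = 5)
    (V : Type*) [AddCommGroup V] [Module A V] [Module k V]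
    [IsScalarTower k A V] [SMulCommClass A k V]
    (hfaith : ∀ a : A, (∀ v : V, a • v = 0) → a = 0)
    (hdimV : Module.finrank k V = 6)
    (hmax : (Algebra.lsmul k k V : A →ₐ[k] Module.End k V).range =
      Subalgebra.centralizer k
        ((Algebra.lsmul k k V : A →ₐ[k] Module.End k V).range : Set (Module.End k V))) :
    False := by
  have : Module.Finite k A := FiniteDimensional.of_finrank_pos (by omega)
  have : Module.Finite k V := FiniteDimensional.of_finrank_pos (by omega)
  have hJ : finrank k ((maximalIdeal A).restrictScalars k) = 4 := by
    have := finrank_maximalIdeal_add_one k A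
    omega
  have ht : 2 ≤ finrank k (V ⧸ radical k A V) := by
    by_contra! h
    have := finrank_le_of_finrank_quotient_radical_le_one (k := k) (A := A) (V := V) (by omega)
    omega
  have hs : 2 ≤ finrank k (socle k A V) := by
    by_contra! h
    have := finrank_le_of_finrank_socle_le_one (k := k) (A := A) (V := V) (by omega)
    omega
  have hts := finrank_quotient_radical_mul_finrank_socle_le hfaith hmax.ge
  have hann : (maximalIdeal A).annihilator ≤ maximalIdeal A := le_maximalIdeal fun h => by
    rw [Submodule.annihilator_eq_top_iff] at h
    rw [h, restrictScalars_bot, finrank_bot] at hJ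
    omega
  have hann_le := finrank_mono (restrictScalars_mono k hann)
  have hannJ : (maximalIdeal A).annihilator = maximalIdeal A := restrictScalars_injective k _ _
    (eq_of_le_of_finrank_eq (restrictScalars_mono k hann) (by nlinarith))
  have hrad : radical k A V ≤ socle k A V :=
    restrictScalars_mono k (smul_top_le_torsionBySet_of_le_annihilator hannJ.ge)
  have := (radical k A V).finrank_quotient_add_finrank
  have := finrank_mono hrad
  nlinarith
end
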